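/- For every integer k ≥ 1 and all nonnegative integers d_1, …, d_k, the following identity holds in ℚ(q, x): (x²;q²)_{d_1+⋯+d_k} / ((q²;q²)_{d_1} ⋯ (q²;q²)_{d_k}) = ∑ (−x² q^{−1})^{α_1+⋯+α_k} · q^{α_1²+⋯+α_k² + 2 ∑_{i=1}^{k−1} α_{i+1}(d_1+⋯+d_i)} / ((q²;q²)_{α_1} ⋯ (q²;q²)_{α_k} (q²;q²)_{β_1} ⋯ (q²;q²)_{β_k}), where the sum runs over all nonnegative integers α_1, β_1, …, α_k, β_k with α_i + β_i = d_i for each i. -/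

import Mathlib

/-!
The blocks of `d₁ + ⋯ + d_k` split the Pochhammer symbol as
`(x²;q²)_{d₁+⋯+d_k} = ∏ⱼ (x² q^{2Dⱼ}; q²)_{dⱼ}` with `Dⱼ = d₁ + ⋯ + d_{j-1}`.
Each factor is expanded by the `q`-binomial theorem
`(u;q²)ₙ / (q²;q²)ₙ = ∑_{a+b=n} (-u q⁻¹)^a q^{a²} / ((q²;q²)_a (q²;q²)_b)`,
and multiplying the `k` sums out gives the claim, since
`(-x² q^{2D} q⁻¹)^a q^{a²} = (-x² q⁻¹)^a q^{a² + 2aD}`.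
The `q`-binomial theorem is proved by induction on `n`, splitting
`1 - q^{2(a+b)} = (1 - q^{2b}) + q^{2b} (1 - q^{2a})` in the summand of index `(a, b)`.
-/

noncomputable section

open Finset

/-- The field `ℚ(q, x)` of rational functions in two variables. -/
abbrev F : Type := FractionRing (MvPolynomial (Fin 2) ℚ)

/-- The variable `q`. -/
def q : F := algebraMap (MvPolynomial (Fin 2) ℚ) F (MvPolynomial.X 0)

/-- The variable `x`. -/
def x : F := algebraMap (MvPolynomial (Fin 2) ℚ) F (MvPolynomial.X 1)

/-- The q-Pochhammer symbol `(x; y)_n = ∏_{j=0}^{n-1} (1 - x yʲ)`. -/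
def qPoch (u v : F) (n : ℕ) : F := ∏ i ∈ Finset.range n, (1 - u * v ^ i)

/-- `(q²;q²)_m = ∏_{i=1}^{m} (1 - q^{2i})`. -/
def qp (m : ℕ) : F := qPoch (q ^ 2) (q ^ 2) m

/-- The positive quantum binomial coefficient `[N; k]₊`. -/
def qbin (N k : ℕ) : F := qp N / (qp k * qp (N - k))

lemma q_ne_zero : q ≠ 0 :=
  (map_ne_zero_iff _ (IsFractionRing.injective (MvPolynomial (Fin 2) ℚ) F)).2
    (MvPolynomial.X_ne_zero 0)

lemma one_sub_q_pow_ne_zero {n : ℕ} (hn : n ≠ 0) : (1 : F) - q ^ n ≠ 0 := by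
  have h : (1 : F) - q ^ n =
      algebraMap (MvPolynomial (Fin 2) ℚ) F (1 - MvPolynomial.X 0 ^ n) := by
    simp [q]
  rw [h, map_ne_zero_iff _ (IsFractionRing.injective (MvPolynomial (Fin 2) ℚ) F)]
  intro h0
  simpa [hn] using congrArg (MvPolynomial.eval 0) h0

lemma qp_succ (m : ℕ) : qp (m + 1) = qp m * (1 - q ^ (2 * (m + 1))) := by
  rw [qp, qPoch, prod_range_succ, ← qPoch, ← qp]
  ring

lemma qp_ne_zero (m : ℕ) : qp m ≠ 0 := by
  induction m with
  | zero => simp [qp, qPoch]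
  | succ m ih => rw [qp_succ]; exact mul_ne_zero ih (one_sub_q_pow_ne_zero (by omega))

lemma qPoch_add (u v : F) (m n : ℕ) :
    qPoch u v (m + n) = qPoch u v m * qPoch (u * v ^ m) v n := by
  simp only [qPoch, prod_range_add, pow_add, mul_assoc]

lemma qPoch_sum (u v : F) {k : ℕ} (d : Fin k → ℕ) :
    qPoch u v (∑ i, d i) = ∏ j, qPoch (u * v ^ (∑ i ∈ Iio j, d i)) v (d j) := by
  induction k with
  | zero => simp [qPoch]
  | succ k ih =>
    rw [Fin.sum_univ_castSucc, qPoch_add, ih, Fin.prod_univ_castSucc, Fin.Iio_last_eq_map,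
      sum_map]
    simp only [Fin.sum_Iio_castSucc]
    rfl

/-- The summand of index `(a, b)`, `a + b = n`, in the expansion of `(u;q²)ₙ / (q²;q²)ₙ`. -/
def qBinomialTerm (u : F) (a b : ℕ) : F := (-u * q⁻¹) ^ a * q ^ (a ^ 2) / (qp a * qp b)

lemma qBinomialTerm_mul_right (u : F) (a b : ℕ) :
    qBinomialTerm u a (b + 1) * (1 - q ^ (2 * (b + 1))) = qBinomialTerm u a b := by
  have := one_sub_q_pow_ne_zero (n := 2 * (b + 1)) (by omega)
  have := qp_ne_zero a
  have := qp_ne_zero b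
  rw [qBinomialTerm, qBinomialTerm, qp_succ]
  field_simp

lemma qBinomialTerm_mul_left (u : F) (a b : ℕ) :
    qBinomialTerm u (a + 1) b * (q ^ (2 * b) * (1 - q ^ (2 * (a + 1)))) =
      -u * q ^ (2 * (a + b)) * qBinomialTerm u a b := by
  have := one_sub_q_pow_ne_zero (n := 2 * (a + 1)) (by omega)
  have := qp_ne_zero a
  have := qp_ne_zero b
  have := q_ne_zero
  rw [qBinomialTerm, qBinomialTerm, qp_succ]
  simp only [mul_pow, inv_pow]
  field_simp
  ring

lemma sum_qBinomialTerm_succ (u : F) (n : ℕ) :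
    (∑ p ∈ antidiagonal (n + 1), qBinomialTerm u p.1 p.2) * (1 - q ^ (2 * (n + 1))) =
      (∑ p ∈ antidiagonal n, qBinomialTerm u p.1 p.2) * (1 - u * q ^ (2 * n)) := by
  have split : ∀ p ∈ antidiagonal (n + 1), qBinomialTerm u p.1 p.2 * (1 - q ^ (2 * (n + 1))) =
      qBinomialTerm u p.1 p.2 * (1 - q ^ (2 * p.2)) +
        qBinomialTerm u p.1 p.2 * (q ^ (2 * p.2) * (1 - q ^ (2 * p.1))) := by
    intro p hp
    rw [← mem_antidiagonal.mp hp]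
    ring
  rw [sum_mul, sum_congr rfl split, sum_add_distrib, Nat.sum_antidiagonal_succ',
    Nat.sum_antidiagonal_succ]
  -- the peeled-off terms of index `(n + 1, 0)` and `(0, n + 1)` carry the factor `1 - q⁰ = 0`
  simp only [mul_zero, pow_zero, sub_self, zero_add, qBinomialTerm_mul_right,
    qBinomialTerm_mul_left]
  rw [mul_sub, mul_one, sub_eq_add_neg, sum_mul, ← sum_neg_distrib]
  congr 1
  refine sum_congr rfl fun p hp => ?_
  rw [mem_antidiagonal.mp hp]
  ring

theorem qPoch_div_qp_eq_sum (u : F) (n : ℕ) :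
    qPoch u (q ^ 2) n / qp n =
      ∑ a ∈ range (n + 1), (-u * q⁻¹) ^ a * q ^ (a ^ 2) / (qp a * qp (n - a)) := by
  change _ = ∑ a ∈ range (n + 1), qBinomialTerm u a (n - a)
  rw [← Nat.sum_antidiagonal_eq_sum_range_succ (qBinomialTerm u)]
  induction n with
  | zero => simp [qBinomialTerm, qPoch, qp]
  | succ n ih =>
    rw [← mul_div_cancel_right₀ (∑ p ∈ antidiagonal (n + 1), qBinomialTerm u p.1 p.2)
      (one_sub_q_pow_ne_zero (n := 2 * (n + 1)) (by omega)), sum_qBinomialTerm_succ, ← ih,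
      qPoch, prod_range_succ, ← qPoch, qp_succ, ← pow_mul]
    field_simp [qp_ne_zero n]

theorem pochhammer_splitting_general (k : ℕ) (d : Fin k → ℕ) :
    qPoch (x ^ 2) (q ^ 2) (∑ i, d i) / ∏ i, qp (d i) =
      ∑ α ∈ Fintype.piFinset (fun i : Fin k => Finset.range (d i + 1)),
        (-(x ^ 2) * q⁻¹) ^ (∑ i, α i) *
          q ^ ((∑ i, (α i) ^ 2) + 2 * ∑ j : Fin k, α j * (∑ i ∈ Finset.Iio j, d i)) /
          ((∏ i, qp (α i)) * ∏ i, qp (d i - α i)) := by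
  have shift (a D : ℕ) : (-(x ^ 2 * (q ^ 2) ^ D) * q⁻¹) ^ a * q ^ (a ^ 2) =
      (-(x ^ 2) * q⁻¹) ^ a * q ^ (a ^ 2 + 2 * (a * D)) := by ring
  rw [qPoch_sum, ← prod_div_distrib]
  simp only [qPoch_div_qp_eq_sum, shift]
  rw [prod_univ_sum]
  refine sum_congr rfl fun α _ => ?_
  rw [prod_div_distrib, prod_mul_distrib, prod_mul_distrib, prod_pow_eq_pow_sum,
    prod_pow_eq_pow_sum, sum_add_distrib, ← mul_sum]

/-- Lemma 4.5 of KRSS: splitting a q-Pochhammer over several summation indices. -/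
theorem pochhammer_splitting (k : ℕ) (hk : 1 ≤ k) (d : Fin k → ℕ) :
    qPoch (x ^ 2) (q ^ 2) (∑ i, d i) / ∏ i, qp (d i) =
      ∑ α ∈ Fintype.piFinset (fun i : Fin k => Finset.range (d i + 1)),
        (-(x ^ 2) * q⁻¹) ^ (∑ i, α i) *
          q ^ ((∑ i, (α i) ^ 2) + 2 * ∑ j : Fin k, α j * (∑ i ∈ Finset.Iio j, d i)) /
          ((∏ i, qp (α i)) * ∏ i, qp (d i - α i)) :=
  pochhammer_splitting_general k d
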